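/- arXiv:1608.02269 — 2 statements merged into one kernel-verified Lean document; each statement's English description precedes it below -/
import Mathlib

section
/- The L-operator satisfies the RLL-type Yang–Baxter relation with the U_q(sl₂) R-matrix: for all u₁, u₂ (with u₂ ≠ 0), R_{ab}(u₁/u₂) L_{aj}(u₁) L_{bj}(u₂) = L_{bj}(u₂) L_{aj}(u₁) R_{ab}(u₁/u₂) as operators on W_a ⊗ W_b ⊗ V_j = ℂ²⊗ℂ²⊗ℂ², where R acts on the factors W_a⊗W_b, L_{aj} on W_a⊗V_j, and L_{bj} on W_b⊗V_j. -/
open Finset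

variable {K : Type*} [Field K]

/-- Matrix elements `⟨γ, δ| L(u) |α, β⟩` of the homogeneous `L`-operator:
`γ` auxiliary output, `δ` quantum output, `α` auxiliary input, `β` quantum input. -/
def LL (t a b c d e f u : K) (γ δ α β : Fin 2) : K :=
  if γ = 0 ∧ δ = 0 ∧ α = 0 ∧ β = 0 then a * u + b
  else if γ = 0 ∧ δ = 1 ∧ α = 0 ∧ β = 1 then a * t * u + b
  else if γ = 0 ∧ δ = 1 ∧ α = 1 ∧ β = 0 then (1 - t) * c * u
  else if γ = 1 ∧ δ = 0 ∧ α = 0 ∧ β = 1 then (1 - t) * d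
  else if γ = 1 ∧ δ = 0 ∧ α = 1 ∧ β = 0 then e * u + f
  else if γ = 1 ∧ δ = 1 ∧ α = 1 ∧ β = 1 then e * u + t * f
  else 0

/-- Matrix elements `⟨γ, δ| R(u) |α, β⟩` of the `U_q(sl₂)` `R`-matrix. -/
def Rm (t u : K) (γ δ α β : Fin 2) : K :=
  if γ = 0 ∧ δ = 0 ∧ α = 0 ∧ β = 0 then u - t
  else if γ = 0 ∧ δ = 1 ∧ α = 0 ∧ β = 1 then t * (u - 1)
  else if γ = 0 ∧ δ = 1 ∧ α = 1 ∧ β = 0 then (1 - t) * u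
  else if γ = 1 ∧ δ = 0 ∧ α = 0 ∧ β = 1 then 1 - t
  else if γ = 1 ∧ δ = 0 ∧ α = 1 ∧ β = 0 then u - 1
  else if γ = 1 ∧ δ = 1 ∧ α = 1 ∧ β = 1 then u - t
  else 0

/-- `R_{ab}(u)` acting on the factors `W_a ⊗ W_b` of `W_a ⊗ W_b ⊗ V_j`. -/
def R12 (t u : K) : Matrix (Fin 2 × Fin 2 × Fin 2) (Fin 2 × Fin 2 × Fin 2) K :=
  Matrix.of fun p q => Rm t u p.1 p.2.1 q.1 q.2.1 * (if p.2.2 = q.2.2 then 1 else 0)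

/-- `L_{aj}(u)` acting on the factors `W_a ⊗ V_j` of `W_a ⊗ W_b ⊗ V_j`. -/
def L13 (t a b c d e f u : K) :
    Matrix (Fin 2 × Fin 2 × Fin 2) (Fin 2 × Fin 2 × Fin 2) K :=
  Matrix.of fun p q => LL t a b c d e f u p.1 p.2.2 q.1 q.2.2 * (if p.2.1 = q.2.1 then 1 else 0)

/-- `L_{bj}(u)` acting on the factors `W_b ⊗ V_j` of `W_a ⊗ W_b ⊗ V_j`. -/
def L23 (t a b c d e f u : K) :
    Matrix (Fin 2 × Fin 2 × Fin 2) (Fin 2 × Fin 2 × Fin 2) K :=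
  Matrix.of fun p q => LL t a b c d e f u p.2.1 p.2.2 q.2.1 q.2.2 * (if p.1 = q.1 then 1 else 0)

/-! Put `x = u₁ / u₂`, so that `u₁ = x u₂` and every component of both sides is a polynomial.
All three operators conserve the number of `1`s, and all but four of the 64 components agree
identically; the four exchanging `|010⟩ ↔ |100⟩` and `|011⟩ ↔ |101⟩` differ by multiples of
`(c d + a f) - (t c d + b e)` and `t² (c d + a f) - (t c d + b e)`. -/

section Components

variable (t a b c d e f : K)

theorem R12_mul_L13_apply (x u : K) (i j k l m n : Fin 2) :
    (R12 t x * L13 t a b c d e f u) (i, j, k) (l, m, n) =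
      ∑ r, Rm t x i j r m * LL t a b c d e f u r k l n := by
  simp only [Matrix.mul_apply, R12, L13, Matrix.of_apply, Fintype.sum_prod_type, mul_ite, ite_mul,
    mul_one, mul_zero, zero_mul, sum_ite_irrel, sum_const_zero, sum_ite_eq, sum_ite_eq', mem_univ,
    ↓reduceIte]

theorem L23_mul_L13_apply (u v : K) (i j k l m n : Fin 2) :
    (L23 t a b c d e f v * L13 t a b c d e f u) (i, j, k) (l, m, n) =
      ∑ w, LL t a b c d e f v j k m w * LL t a b c d e f u i w l n := by
  simp only [Matrix.mul_apply, L23, L13, Matrix.of_apply, Fintype.sum_prod_type, mul_ite, ite_mul,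
    mul_one, mul_zero, zero_mul, sum_ite_irrel, sum_const_zero, sum_ite_eq, sum_ite_eq', mem_univ,
    ↓reduceIte]

theorem R12_mul_L13_mul_L23_apply (x u v : K) (i j k l m n : Fin 2) :
    (R12 t x * L13 t a b c d e f u * L23 t a b c d e f v) (i, j, k) (l, m, n) =
      ∑ r, ∑ s, ∑ w, Rm t x i j r s * LL t a b c d e f u r k l w * LL t a b c d e f v s w m n := by
  rw [Matrix.mul_apply]
  simp only [Fintype.sum_prod_type, R12_mul_L13_apply, L23, Matrix.of_apply, mul_ite, mul_one,
    mul_zero, sum_ite_irrel, sum_const_zero, sum_ite_eq', mem_univ, ↓reduceIte, sum_mul]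
  exact (sum_congr rfl fun _ _ => sum_comm).trans sum_comm

theorem L23_mul_L13_mul_R12_apply (x u v : K) (i j k l m n : Fin 2) :
    (L23 t a b c d e f v * L13 t a b c d e f u * R12 t x) (i, j, k) (l, m, n) =
      ∑ r, ∑ s, ∑ w, LL t a b c d e f v j k s w * LL t a b c d e f u i w r n * Rm t x r s l m := by
  rw [Matrix.mul_apply]
  simp only [Fintype.sum_prod_type, L23_mul_L13_apply, R12, Matrix.of_apply, mul_ite, mul_one,
    mul_zero, sum_ite_eq', mem_univ, ↓reduceIte, sum_mul]

end Components

theorem R12_mul_L13_mul_L23_eq_of_mul_eq (t a b c d e f x u₁ u₂ : K)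
    (hcon1 : c * d + a * f = 0) (hcon2 : t * (c * d) + b * e = 0) (hx : x * u₂ = u₁) :
    R12 t x * L13 t a b c d e f u₁ * L23 t a b c d e f u₂ =
      L23 t a b c d e f u₂ * L13 t a b c d e f u₁ * R12 t x := by
  subst hx
  ext ⟨i, j, k⟩ ⟨l, m, n⟩
  rw [R12_mul_L13_mul_L23_apply, L23_mul_L13_mul_R12_apply]
  revert i j k l m n
  simp only [Fin.forall_fin_two, Fin.sum_univ_two]
  and_intros <;>
    simp only [Rm, LL, Fin.isValue, and_true, and_false, ↓reduceIte, mul_zero, zero_mul, add_zero,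
      zero_add, one_ne_zero, zero_ne_one, and_self] <;>
    first
    | ring1
    | linear_combination (1 - t) * x * u₂ * (1 - x) * (hcon1 - hcon2)
    | linear_combination (t - 1) * u₂ * (1 - x) * (hcon1 - hcon2)
    | linear_combination (1 - t) * x * u₂ * (1 - x) * (t ^ 2 * hcon1 - hcon2)
    | linear_combination (t - 1) * u₂ * (1 - x) * (t ^ 2 * hcon1 - hcon2)

theorem RLL_relation_general (t a b c d e f : K)
    (hcon1 : c * d + a * f = 0) (hcon2 : t * (c * d) + b * e = 0)
    (u₁ u₂ : K) (hu₂ : u₂ ≠ 0) :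
    R12 t (u₁ / u₂) * L13 t a b c d e f u₁ * L23 t a b c d e f u₂ =
      L23 t a b c d e f u₂ * L13 t a b c d e f u₁ * R12 t (u₁ / u₂) :=
  R12_mul_L13_mul_L23_eq_of_mul_eq t a b c d e f _ u₁ u₂ hcon1 hcon2 (div_mul_cancel₀ u₁ hu₂)

theorem RLL_relation (t a b c d e f : K)
    (ht : t ≠ 1) (ha : a ≠ 0) (hb : b ≠ 0) (hc : c ≠ 0) (hd : d ≠ 0)
    (he : e ≠ 0) (hf : f ≠ 0)
    (hcon1 : c * d + a * f = 0) (hcon2 : t * (c * d) + b * e = 0)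
    (u₁ u₂ : K) (hu₂ : u₂ ≠ 0) :
    R12 t (u₁ / u₂) * L13 t a b c d e f u₁ * L23 t a b c d e f u₂ =
      L23 t a b c d e f u₂ * L13 t a b c d e f u₁ * R12 t (u₁ / u₂) :=
  RLL_relation_general t a b c d e f hcon1 hcon2 u₁ u₂ hu₂
end

section
/- Matrix elements of the B-operator: for increasing sequences 1 ≤ x₁ < ⋯ < x_N ≤ M and 1 ≤ y₁ < ⋯ < y_{N+1} ≤ M, one has ⟨y₁⋯y_{N+1}| B(u) |x₁⋯x_N⟩ = G_{y,x}(u), where G_{y,x}(u) = 0 unless the interlacing condition y ≻ x holds (i.e. y₁ ≤ x₁ ≤ y₂ ≤ x₂ ≤ ⋯ ≤ x_N ≤ y_{N+1}), and if y ≻ x then, letting p₁ < ⋯ < p_{k+1} be the increasing sequence of those y_j (j=1,…,N+1) with y_j ∉ {x_{j−1}, x_j}, letting q₁ < ⋯ < q_k be the increasing sequence of those x_j (j=1,…,N) with x_j ∉ {y_j, y_{j+1}}, and setting q₀ = 0, q_{k+1} = M+1, G_{y,x}(u) = ((1−t)cu)^{k+1} ((1−t)d)^{k} · ∏_{j=1}^{k+1}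 (atu+b)^{#{ℓ : p_j < x_ℓ < q_j}} (au+b)^{q_j − p_j − 1 − #{ℓ : p_j < x_ℓ < q_j}} (eu+tf)^{#{ℓ : q_{j−1} < x_ℓ < p_j}} (eu+f)^{p_j − q_{j−1} − 1 − #{ℓ : q_{j−1} < x_ℓ < p_j}}. -/
open Finset

variable {K : Type*} [Field K]

/-- The operator `B(u) = ⟨0|ₐ L_{aM}(u) ⋯ L_{a1}(u) |1⟩ₐ` on `M` sites,
as a matrix in the standard basis of `(ℂ²)^{⊗M}` indexed by `Fin M → Fin 2`. -/
def Bop (M : ℕ) (t a b c d e f u : K) :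
    Matrix (Fin M → Fin 2) (Fin M → Fin 2) K :=
  Matrix.of fun γ β =>
    ∑ α : Fin (M + 1) → Fin 2,
      if α 0 = 1 ∧ α (Fin.last M) = 0 then
        ∏ j : Fin M, LL t a b c d e f u (α j.succ) (γ j) (α j.castSucc) (β j)
      else 0

/-- The basis vector index of `(ℂ²)^{⊗M}` with particles (`1`s) exactly at the sites
in the range of `x`. -/
def cfg {M N : ℕ} (x : Fin N → Fin M) : Fin M → Fin 2 :=
  fun i => if ∃ j, x j = i then 1 else 0

/-- The interlacing condition `y ≻ x`, i.e. `y₁ ≤ x₁ ≤ y₂ ≤ x₂ ≤ ⋯ ≤ x_N ≤ y_{N+1}`. -/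
def interlace {M N : ℕ} (y : Fin (N + 1) → Fin M) (x : Fin N → Fin M) : Prop :=
  ∀ j : Fin N, y j.castSucc ≤ x j ∧ x j ≤ y j.succ

instance {M N : ℕ} (y : Fin (N + 1) → Fin M) (x : Fin N → Fin M) :
    Decidable (interlace y x) :=
  inferInstanceAs (Decidable (∀ j : Fin N, y j.castSucc ≤ x j ∧ x j ≤ y j.succ))

/-- Indices `j` with `y_j ∉ {x_{j-1}, x_j}` (the `p`-sequence indices). -/
def Pset {M N : ℕ} (y : Fin (N + 1) → Fin M) (x : Fin N → Fin M) : Finset (Fin (N + 1)) :=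
  univ.filter fun j =>
    ∀ ℓ : Fin N, ((ℓ : ℕ) = (j : ℕ) ∨ (ℓ : ℕ) + 1 = (j : ℕ)) → x ℓ ≠ y j

/-- Indices `ℓ` with `x_ℓ ∉ {y_ℓ, y_{ℓ+1}}` (the `q`-sequence indices). -/
def Qset {M N : ℕ} (y : Fin (N + 1) → Fin M) (x : Fin N → Fin M) : Finset (Fin N) :=
  univ.filter fun ℓ =>
    ∀ m : Fin (N + 1), ((m : ℕ) = (ℓ : ℕ) ∨ (m : ℕ) = (ℓ : ℕ) + 1) → y m ≠ x ℓ

/-- The (1-based) site `p_{i+1}` of the increasing enumeration of the `p`-sequence. -/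
def pseq {M N : ℕ} (y : Fin (N + 1) → Fin M) (x : Fin N → Fin M)
    (i : Fin (Pset y x).card) : ℕ :=
  ((y ((Pset y x).orderEmbOfFin rfl i)) : ℕ) + 1

/-- The (1-based) sites `q_i` of the `q`-sequence, extended by `q₀ = 0` and
`q_{k+1} = M + 1`. -/
def qseq {M N : ℕ} (y : Fin (N + 1) → Fin M) (x : Fin N → Fin M) (i : ℕ) : ℕ :=
  if h0 : i = 0 then 0
  else if h : i ≤ (Qset y x).card then
    ((x ((Qset y x).orderEmbOfFin rfl ⟨i - 1, by omega⟩)) : ℕ) + 1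
  else M + 1

/-- The number of particles `x_ℓ` strictly between the (1-based) sites `lo` and `hi`. -/
def cnt {M N : ℕ} (x : Fin N → Fin M) (lo hi : ℕ) : ℕ :=
  (univ.filter fun ℓ : Fin N => lo < (x ℓ : ℕ) + 1 ∧ (x ℓ : ℕ) + 1 < hi).card

/-- The skew polynomial `G_{y,x}(u)`. -/
def Gskew {M N : ℕ} (t a b c d e f u : K)
    (y : Fin (N + 1) → Fin M) (x : Fin N → Fin M) : K :=
  if interlace y x then
    ((1 - t) * c * u) ^ (Pset y x).card * ((1 - t) * d) ^ (Qset y x).card *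
      ∏ j : Fin (Pset y x).card,
        (a * t * u + b) ^ cnt x (pseq y x j) (qseq y x ((j : ℕ) + 1)) *
          (a * u + b) ^ (qseq y x ((j : ℕ) + 1) - pseq y x j - 1 -
            cnt x (pseq y x j) (qseq y x ((j : ℕ) + 1))) *
          (e * u + t * f) ^ cnt x (qseq y x (j : ℕ)) (pseq y x j) *
          (e * u + f) ^ (pseq y x j - qseq y x (j : ℕ) - 1 -
            cnt x (qseq y x (j : ℕ)) (pseq y x j))
  else 0

/-!
Expanding the product of `L`-operators writes `⟨y| B(u) |x⟩` as a sum over sequences of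
auxiliary states `α₀ = 1, α₁, …, α_M = 0`, and every matrix element of `L` that does not conserve
the particle number vanishes. So the only sequence that can contribute is
`α_m = 1 + #{ℓ | x_ℓ ≤ m} - #{j | y_j ≤ m}`, which stays in `{0, 1}` exactly when `y ≻ x`.
In that case the sites occupied in both configurations leave `α` unchanged, so `α` drops from
`1` to `0` exactly at the sites `p_j` and rises back at the `q_j`: these alternate as
`q₀ < p₁ < q₁ < ⋯ < q_k < p_{k+1} < q_{k+1}`, with `α = 1` on `[q_{j-1}, p_j)` and `α = 0` on
`[p_j, q_j)`. Reading off the weight of every site gives `G_{y,x}(u)`.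
-/

section TransferMatrix

variable {M : ℕ}

def occBelow (σ : Fin M → Fin 2) (m : ℕ) : ℕ :=
  #{j : Fin M | (j : ℕ) < m ∧ σ j = 1}

/-- The auxiliary state after the first `m` sites, as forced by particle conservation. -/
def pathHeight (γ β : Fin M → Fin 2) (m : ℕ) : ℤ :=
  1 + occBelow β m - occBelow γ m

lemma occBelow_zero (σ : Fin M → Fin 2) : occBelow σ 0 = 0 := by
  simp [occBelow]

lemma occBelow_succ (σ : Fin M → Fin 2) (j : Fin M) :
    occBelow σ (j + 1) = occBelow σ j + σ j := by
  have hsplit : univ.filter (fun i : Fin M => (i : ℕ) < j + 1 ∧ σ i = 1) =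
      univ.filter (fun i : Fin M => (i : ℕ) < j ∧ σ i = 1) ∪
        univ.filter (fun i => i = j ∧ σ i = 1) := by
    ext i
    simp only [mem_union, mem_filter, mem_univ, true_and, ← Fin.val_inj]
    omega
  rw [occBelow, occBelow, hsplit, card_union_of_disjoint (disjoint_filter.mpr fun i _ h h' => by
    rw [← Fin.val_inj] at h'; omega)]
  congr 1
  rcases (by decide : ∀ s : Fin 2, s = 0 ∨ s = 1) (σ j) with hσ | hσ
  · simp [hσ]
  · rw [hσ, Fin.val_one, card_eq_one]
    refine ⟨j, ext fun i => ?_⟩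
    simp only [mem_filter, mem_univ, true_and, mem_singleton, and_iff_left_iff_imp]
    rintro rfl
    exact hσ

lemma pathHeight_zero (γ β : Fin M → Fin 2) : pathHeight γ β 0 = 1 := by
  simp [pathHeight, occBelow_zero]

lemma pathHeight_succ (γ β : Fin M → Fin 2) (j : Fin M) :
    pathHeight γ β (j + 1) = pathHeight γ β j + β j - γ j := by
  simp only [pathHeight, occBelow_succ]
  push_cast
  ring

variable {t a b c d e f u : K}

lemma conserve_of_LL_ne_zero {γ δ α β : Fin 2} (h : LL t a b c d e f u γ δ α β ≠ 0) :
    (γ : ℤ) + δ = α + β := by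
  fin_cases γ <;> fin_cases δ <;> fin_cases α <;> fin_cases β <;> simp_all [LL]

lemma eq_pathHeight_of_prod_ne_zero {γ β : Fin M → Fin 2} {α : Fin (M + 1) → Fin 2}
    (h0 : α 0 = 1)
    (hw : ∏ j, LL t a b c d e f u (α j.succ) (γ j) (α j.castSucc) (β j) ≠ 0) :
    ∀ m : Fin (M + 1), (α m : ℤ) = pathHeight γ β m := by
  intro m
  induction m using Fin.induction with
  | zero => simp [h0, pathHeight_zero]
  | succ j ih =>
    have := conserve_of_LL_ne_zero (prod_ne_zero_iff.mp hw j (mem_univ j))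
    rw [Fin.val_castSucc] at ih
    rw [show ((j.succ : Fin (M + 1)) : ℕ) = j + 1 from Fin.val_succ j, pathHeight_succ, ← ih]
    linarith

theorem Bop_apply_eq_zero {γ β : Fin M → Fin 2}
    (h : ∃ m : Fin (M + 1), pathHeight γ β m < 0 ∨ 1 < pathHeight γ β m) :
    Bop M t a b c d e f u γ β = 0 := by
  obtain ⟨m, hm⟩ := h
  refine sum_eq_zero fun α _ => ite_eq_right_iff.mpr fun hα => by_contra fun hw => ?_
  have := eq_pathHeight_of_prod_ne_zero hα.1 hw m
  have := (α m).isLt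
  omega

theorem Bop_apply_eq_prod {γ β : Fin M → Fin 2} {α : Fin (M + 1) → Fin 2}
    (hα : ∀ m : Fin (M + 1), (α m : ℤ) = pathHeight γ β m) (hM : pathHeight γ β M = 0) :
    Bop M t a b c d e f u γ β =
      ∏ j, LL t a b c d e f u (α j.succ) (γ j) (α j.castSucc) (β j) := by
  have hbd : α 0 = 1 ∧ α (Fin.last M) = 0 := by
    constructor <;> apply Fin.ext <;> apply Int.ofNat_inj.mp
    · simpa [pathHeight_zero] using hα 0
    · simpa [hM] using hα (Fin.last M)
  refine (sum_eq_single α (fun α' _ hne => ite_eq_right_iff.mpr fun hα' => by_contra fun hw => ?_)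
    (by simp)).trans (if_pos hbd)
  refine hne (funext fun m => Fin.ext (Int.ofNat_inj.mp ?_))
  rw [eq_pathHeight_of_prod_ne_zero hα'.1 hw m, hα m]

end TransferMatrix

section Counting

lemma card_filter_comp_of_injective {ι α : Type*} [Fintype ι] [Fintype α] [DecidableEq α]
    {f : ι → α} (hf : Function.Injective f) (p : α → Prop) [DecidablePred p] :
    #{i | p (f i)} = #{a | (∃ i, f i = a) ∧ p a} := by
  rw [← card_image_of_injective _ hf]
  congr 1
  ext a
  simp only [mem_image, mem_filter, mem_univ, true_and]
  exact ⟨fun ⟨i, hi, hia⟩ => ⟨⟨i, hia⟩, hia ▸ hi⟩, fun ⟨⟨i, hia⟩, ha⟩ => ⟨i, hia ▸ ha, hia⟩⟩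

lemma card_filter_comp_orderEmbOfFin {ι α : Type*} [LinearOrder ι] [DecidableEq α]
    (S : Finset ι) {g : ι → α} (hg : Function.Injective g) (p : α → Prop) [DecidablePred p] :
    #{i | p (g (S.orderEmbOfFin rfl i))} = #{a ∈ S.image g | p a} := by
  rw [← card_image_of_injective _ (hg.comp (S.orderEmbOfFin rfl).injective)]
  congr 1
  ext a
  simp only [mem_image, mem_filter, mem_univ, true_and, Function.comp_apply]
  constructor
  · rintro ⟨i, hi, rfl⟩
    exact ⟨⟨_, S.orderEmbOfFin_mem rfl i, rfl⟩, hi⟩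
  · rintro ⟨⟨j, hj, rfl⟩, hp⟩
    obtain ⟨i, rfl⟩ : j ∈ Set.range (S.orderEmbOfFin rfl) := by rwa [range_orderEmbOfFin]
    exact ⟨i, hp, rfl⟩

lemma StrictMono.lt_card_filter_iff {α : Type*} [LinearOrder α] {n : ℕ} {f : Fin n → α}
    (hf : StrictMono f) {p : α → Prop} [DecidablePred p] (hp : ∀ ⦃a b⦄, b ≤ a → p a → p b)
    (i : Fin n) : (i : ℕ) < #{j | p (f j)} ↔ p (f i) := by
  constructor
  · intro hi
    by_contra hpi
    have : #{j | p (f j)} ≤ #(Iio i) := card_le_card fun j hj =>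
      mem_Iio.mpr (hf.lt_iff_lt.mp (lt_of_not_ge fun hij => hpi (hp hij (mem_filter.mp hj).2)))
    rw [Fin.card_Iio] at this
    omega
  · intro hpi
    have : #(Iic i) ≤ #{j | p (f j)} := card_le_card fun j hj =>
      mem_filter.mpr ⟨mem_univ j, hp (hf.monotone (mem_Iic.mp hj)) hpi⟩
    rw [Fin.card_Iic] at this
    omega

variable {M N : ℕ}

lemma cfg_eq_one_iff {n : ℕ} (x : Fin n → Fin M) (s : Fin M) : cfg x s = 1 ↔ ∃ ℓ, x ℓ = s := by
  unfold cfg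
  split_ifs with h <;> simp [h]

lemma occBelow_cfg {n : ℕ} {x : Fin n → Fin M} (hx : Function.Injective x) (m : ℕ) :
    occBelow (cfg x) m = #{ℓ | (x ℓ : ℕ) < m} := by
  rw [occBelow, card_filter_comp_of_injective hx (fun s : Fin M => (s : ℕ) < m)]
  simp only [cfg_eq_one_iff, and_comm]

lemma lt_card_filter_val_lt_iff {n : ℕ} {x : Fin n → Fin M} (hx : StrictMono x) (ℓ : Fin n)
    (m : ℕ) : (ℓ : ℕ) < #{i | (x i : ℕ) < m} ↔ (x ℓ : ℕ) < m :=
  (Fin.val_strictMono.comp hx).lt_card_filter_iff (p := (· < m)) (fun _ _ => lt_of_le_of_lt) ℓ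

variable {x : Fin N → Fin M} {y : Fin (N + 1) → Fin M}

lemma pathHeight_cfg (hx : StrictMono x) (hy : StrictMono y) (m : ℕ) :
    pathHeight (cfg y) (cfg x) m = 1 + #{ℓ | (x ℓ : ℕ) < m} - #{j | (y j : ℕ) < m} := by
  rw [pathHeight, occBelow_cfg hx.injective, occBelow_cfg hy.injective]

theorem pathHeight_mem_of_interlace (hx : StrictMono x) (hy : StrictMono y)
    (hi : interlace y x) (m : ℕ) :
    0 ≤ pathHeight (cfg y) (cfg x) m ∧ pathHeight (cfg y) (cfg x) m ≤ 1 := by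
  have hx' := lt_card_filter_val_lt_iff hx
  have hy' := lt_card_filter_val_lt_iff hy
  rw [pathHeight_cfg hx hy]
  have hcx : #{ℓ | (x ℓ : ℕ) < m} ≤ N := card_le_univ _ |>.trans_eq (Fintype.card_fin N)
  have hcy : #{j | (y j : ℕ) < m} ≤ N + 1 := card_le_univ _ |>.trans_eq (Fintype.card_fin _)
  constructor
  · by_contra! h
    set ℓ : Fin N := ⟨#{ℓ | (x ℓ : ℕ) < m}, by omega⟩
    have hyℓ : (y ℓ.succ : ℕ) < m := (hy' ℓ.succ m).mp (by simp only [Fin.succ_mk, ℓ]; omega)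
    have := (hx' ℓ m).mpr ((Fin.le_def.mp (hi ℓ).2).trans_lt hyℓ)
    simp [ℓ] at this
  · by_contra! h
    set ℓ : Fin N := ⟨#{j | (y j : ℕ) < m}, by omega⟩
    have hxℓ : (x ℓ : ℕ) < m := (hx' ℓ m).mp (by simp only [ℓ]; omega)
    have := (hy' ℓ.castSucc m).mpr ((Fin.le_def.mp (hi ℓ).1).trans_lt hxℓ)
    simp [ℓ] at this

theorem interlace_of_pathHeight_mem (hx : StrictMono x) (hy : StrictMono y)
    (h : ∀ m : Fin (M + 1),
      0 ≤ pathHeight (cfg y) (cfg x) m ∧ pathHeight (cfg y) (cfg x) m ≤ 1) :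
    interlace y x := by
  have hx' := lt_card_filter_val_lt_iff hx
  have hy' := lt_card_filter_val_lt_iff hy
  intro j
  constructor
  · by_contra! hlt
    have := h ⟨x j + 1, by omega⟩
    rw [pathHeight_cfg hx hy] at this
    dsimp only at this
    have h1 := (hx' j (x j + 1)).mpr (Nat.lt_add_one _)
    have h2 := (hy' j.castSucc (x j + 1)).not.mpr (not_lt.mpr (Fin.lt_def.mp hlt))
    simp only [Fin.val_castSucc, not_lt] at h2
    omega
  · by_contra! hlt
    have := h ⟨y j.succ + 1, by omega⟩
    rw [pathHeight_cfg hx hy] at this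
    dsimp only at this
    have h1 := (hy' j.succ (y j.succ + 1)).mpr (Nat.lt_add_one _)
    have h2 := (hx' j (y j.succ + 1)).not.mpr (not_lt.mpr (Fin.lt_def.mp hlt))
    simp only [Fin.val_succ, not_lt] at h1 h2
    omega

end Counting

section Intervals

variable {β : Type*} [CommMonoid β]

lemma prod_Ioo_split (F : ℕ → β) {a b c : ℕ} (hab : a < b) (hbc : b < c) :
    ∏ n ∈ Ioo a c, F n = (∏ n ∈ Ioo a b, F n) * F b * ∏ n ∈ Ioo b c, F n := by
  have hsplit : Ioo a c = Ioo a b ∪ insert b (Ioo b c) := by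
    ext n
    simp only [mem_union, mem_insert, mem_Ioo]
    omega
  rw [hsplit, prod_union (disjoint_left.mpr fun n hn hn' => by simp only [mem_Ioo, mem_insert] at hn hn'; omega),
    prod_insert (by simp), mul_assoc]

lemma prod_Ioo_eq_prod_blocks (F : ℕ → β) (q : ℕ → ℕ) {n : ℕ} (p : Fin n → ℕ)
    (h : ∀ j : Fin n, q j < p j ∧ p j < q (j + 1)) :
    ∏ m ∈ Ioo (q 0) (q n), F m =
      (∏ j : Fin n,
        (∏ m ∈ Ioo (q j) (p j), F m) * F (p j) * ∏ m ∈ Ioo (p j) (q (j + 1)), F m) *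
      ∏ j ∈ Ioo 0 n, F (q j) := by
  induction n with
  | zero => simp
  | succ n ih =>
    have hlast := h (Fin.last n)
    simp only [Fin.val_last] at hlast
    rw [Fin.prod_univ_castSucc]
    rcases n with _ | k
    · simp [prod_Ioo_split F hlast.1 hlast.2, show Ioo 0 1 = ∅ by rfl]
    have hq : ∀ i ≤ k, q 0 ≤ q i := by
      intro i hi
      induction i with
      | zero => rfl
      | succ i ihi =>
        have hi := h ⟨i, by omega⟩
        exact (ihi (by omega)).trans (hi.1.trans hi.2).le
    have hk := h ⟨k, by omega⟩
    rw [prod_Ioo_split F ((hq k le_rfl).trans_lt (hk.1.trans hk.2)) (hlast.1.trans hlast.2),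
      ih (p ∘ Fin.castSucc) fun j => h j.castSucc, prod_Ioo_split F hlast.1 hlast.2,
      show Ioo 0 (k + 1 + 1) = insert (k + 1) (Ioo 0 (k + 1)) by ext; simp,
      prod_insert (by simp)]
    simp only [Function.comp_apply, Fin.val_castSucc, Fin.val_last]
    ac_rfl

end Intervals

section SiteWeights

variable (t a b c d e f u : K)

/-- The weight of a site across which the auxiliary state goes from `h` to `h'`. -/
def heightWeight (h h' : ℤ) (occupied : Prop) [Decidable occupied] : K :=
  if h' < h then (1 - t) * c * u
  else if h < h' then (1 - t) * d
  else if h = 0 then (if occupied then a * t * u + b else a * u + b)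
  else if occupied then e * u + t * f else e * u + f

lemma LL_eq_heightWeight {h h' ξ η : Fin 2} (hc : (h' : ℤ) + η = h + ξ) :
    LL t a b c d e f u h' η h ξ = heightWeight t a b c d e f u h h' (ξ = 1) := by
  fin_cases h <;> fin_cases h' <;> fin_cases ξ <;> fin_cases η <;> simp_all [LL, heightWeight]

lemma prod_LL_eq_prod_heightWeight {M : ℕ} {γ β : Fin M → Fin 2} {α : Fin (M + 1) → Fin 2}
    (hα : ∀ m : Fin (M + 1), (α m : ℤ) = pathHeight γ β m) :
    ∏ j, LL t a b c d e f u (α j.succ) (γ j) (α j.castSucc) (β j) =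
      ∏ j : Fin M, heightWeight t a b c d e f u (pathHeight γ β j) (pathHeight γ β (j + 1))
        (β j = 1) := by
  refine prod_congr rfl fun j _ => ?_
  have hs := hα j.succ
  have hc := hα j.castSucc
  rw [Fin.val_succ] at hs
  rw [Fin.val_castSucc] at hc
  rw [LL_eq_heightWeight t a b c d e f u (by rw [hs, hc, pathHeight_succ]; ring), hs, hc]

/-- Sites are numbered from `1` here, as in `pseq` and `qseq`. -/
def siteWeight {M N : ℕ} (y : Fin (N + 1) → Fin M) (x : Fin N → Fin M) (n : ℕ) : K :=
  heightWeight t a b c d e f u (pathHeight (cfg y) (cfg x) (n - 1)) (pathHeight (cfg y) (cfg x) n)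
    (∃ ℓ, (x ℓ : ℕ) + 1 = n)

lemma prod_heightWeight_eq_prod_siteWeight {M N : ℕ} (y : Fin (N + 1) → Fin M)
    (x : Fin N → Fin M) :
    ∏ j : Fin M, heightWeight t a b c d e f u (pathHeight (cfg y) (cfg x) j)
        (pathHeight (cfg y) (cfg x) (j + 1)) (cfg x j = 1) =
      ∏ n ∈ Ioo 0 (M + 1), siteWeight t a b c d e f u y x n := by
  have hocc (j : Fin M) : cfg x j = 1 ↔ ∃ ℓ, (x ℓ : ℕ) + 1 = j + 1 := by
    rw [cfg_eq_one_iff]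
    simp [Fin.ext_iff]
  trans ∏ j : Fin M, siteWeight t a b c d e f u y x (j + 1)
  · exact prod_congr rfl fun j _ => by simp only [siteWeight, hocc, Nat.add_sub_cancel]
  rw [Fin.prod_univ_eq_prod_range (fun j => siteWeight t a b c d e f u y x (j + 1)), range_eq_Ico,
    prod_Ico_add', Ico_add_one_left_eq_Ioo]

lemma prod_Ioo_ite_eq_pow {M N : ℕ} {x : Fin N → Fin M} (hx : Function.Injective x)
    (A B : K) (lo hi : ℕ) :
    ∏ n ∈ Ioo lo hi, (if ∃ ℓ, (x ℓ : ℕ) + 1 = n then A else B) =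
      A ^ cnt x lo hi * B ^ (hi - lo - 1 - cnt x lo hi) := by
  have hcnt : cnt x lo hi = #{n ∈ Ioo lo hi | ∃ ℓ, (x ℓ : ℕ) + 1 = n} := by
    rw [cnt, ← card_image_of_injective _ (fun ℓ ℓ' h => hx (Fin.ext (by simpa using h)) :
      Function.Injective fun ℓ => (x ℓ : ℕ) + 1)]
    congr 1
    ext n
    simp only [mem_image, mem_filter, mem_univ, true_and, mem_Ioo]
    grind
  rw [prod_ite, prod_const, prod_const, hcnt, ← Nat.card_Ioo,
    ← card_filter_add_card_filter_not (s := Ioo lo hi) (fun n => ∃ ℓ, (x ℓ : ℕ) + 1 = n)]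
  simp

end SiteWeights

section SkewSites

variable {M N : ℕ} {x : Fin N → Fin M} {y : Fin (N + 1) → Fin M}

lemma adjacent_of_eq (hx : StrictMono x) (hy : StrictMono y) (hi : interlace y x)
    {ℓ : Fin N} {m : Fin (N + 1)} (h : x ℓ = y m) : (m : ℕ) = ℓ ∨ (m : ℕ) = ℓ + 1 := by
  by_contra! hne
  rcases lt_or_gt_of_ne hne.1 with hlt | hgt
  · have hm : (m : ℕ) < N := hlt.trans ℓ.isLt
    have h1 := (hi ⟨m, hm⟩).1
    have h2 : x ⟨m, hm⟩ < x ℓ := hx (Fin.lt_def.mpr hlt)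
    exact (h ▸ h2).not_ge (by simpa [Fin.castSucc] using h1)
  · exact (h ▸ (hi ℓ).2).not_gt (hy (Fin.lt_def.mpr (by simp only [Fin.val_succ]; omega)))

lemma mem_Pset_iff (hx : StrictMono x) (hy : StrictMono y) (hi : interlace y x)
    (m : Fin (N + 1)) : m ∈ Pset y x ↔ ∀ ℓ, x ℓ ≠ y m := by
  simp only [Pset, mem_filter, mem_univ, true_and]
  exact ⟨fun h ℓ hℓ => h ℓ (by rcases adjacent_of_eq hx hy hi hℓ with h' | h' <;> omega) hℓ,
    fun h ℓ _ => h ℓ⟩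

lemma mem_Qset_iff (hx : StrictMono x) (hy : StrictMono y) (hi : interlace y x)
    (ℓ : Fin N) : ℓ ∈ Qset y x ↔ ∀ m, y m ≠ x ℓ := by
  simp only [Qset, mem_filter, mem_univ, true_and]
  exact ⟨fun h m hm => h m (by rcases adjacent_of_eq hx hy hi hm.symm with h' | h' <;> omega) hm,
    fun h m _ => h m⟩

/-- The (one-based) site `q_{i+1}`, without the conventions `q₀ = 0`, `q_{k+1} = M + 1`. -/
def qsite (y : Fin (N + 1) → Fin M) (x : Fin N → Fin M) (i : Fin (Qset y x).card) : ℕ :=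
  (x ((Qset y x).orderEmbOfFin rfl i) : ℕ) + 1

lemma qseq_zero : qseq y x 0 = 0 := rfl

lemma qseq_succ (i : Fin (Qset y x).card) : qseq y x (i + 1) = qsite y x i := by
  simp [qseq, qsite, Nat.succ_le_of_lt i.isLt]

lemma qseq_of_card_lt {i : ℕ} (h : (Qset y x).card < i) : qseq y x i = M + 1 := by
  simp [qseq, show i ≠ 0 by omega, show ¬ i ≤ (Qset y x).card by omega]

lemma strictMono_pseq (hy : StrictMono y) : StrictMono (pseq y x) := fun _ _ h =>
  Nat.add_lt_add_right (Fin.lt_def.mp (hy ((Pset y x).orderEmbOfFin rfl |>.strictMono h))) 1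

lemma strictMono_qsite (hx : StrictMono x) : StrictMono (qsite y x) := fun _ _ h =>
  Nat.add_lt_add_right (Fin.lt_def.mp (hx ((Qset y x).orderEmbOfFin rfl |>.strictMono h))) 1

lemma pseq_le (i : Fin (Pset y x).card) : pseq y x i ≤ M := (Fin.isLt _)

lemma qsite_le (i : Fin (Qset y x).card) : qsite y x i ≤ M := (Fin.isLt _)

lemma pseq_ne_qsite (hx : StrictMono x) (hy : StrictMono y) (hi : interlace y x)
    (i : Fin (Pset y x).card) (i' : Fin (Qset y x).card) : pseq y x i ≠ qsite y x i' := by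
  intro h
  exact (mem_Pset_iff hx hy hi _).mp ((Pset y x).orderEmbOfFin_mem rfl i)
    ((Qset y x).orderEmbOfFin rfl i') (Fin.ext (by simp only [pseq, qsite] at h; omega))

lemma card_pseq_le (hx : StrictMono x) (hy : StrictMono y) (hi : interlace y x) (m : ℕ) :
    #{i | pseq y x i ≤ m} = #{s : Fin M | ((∃ j, y j = s) ∧ ¬∃ ℓ, x ℓ = s) ∧ (s : ℕ) < m} := by
  simp only [pseq, Nat.add_one_le_iff]
  rw [card_filter_comp_orderEmbOfFin _ hy.injective (fun s : Fin M => (s : ℕ) < m)]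
  congr 1
  ext s
  simp only [mem_filter, mem_image, mem_univ, true_and, mem_Pset_iff hx hy hi, not_exists]
  exact and_congr_left' ⟨fun ⟨j, hj, hjs⟩ => ⟨⟨j, hjs⟩, hjs ▸ hj⟩,
    fun ⟨⟨j, hjs⟩, hs⟩ => ⟨j, hjs ▸ hs, hjs⟩⟩

lemma card_qsite_le (hx : StrictMono x) (hy : StrictMono y) (hi : interlace y x) (m : ℕ) :
    #{i | qsite y x i ≤ m} = #{s : Fin M | ((∃ ℓ, x ℓ = s) ∧ ¬∃ j, y j = s) ∧ (s : ℕ) < m} := by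
  simp only [qsite, Nat.add_one_le_iff]
  rw [card_filter_comp_orderEmbOfFin _ hx.injective (fun s : Fin M => (s : ℕ) < m)]
  congr 1
  ext s
  simp only [mem_filter, mem_image, mem_univ, true_and, mem_Qset_iff hx hy hi, not_exists]
  exact and_congr_left' ⟨fun ⟨ℓ, hℓ, hℓs⟩ => ⟨⟨ℓ, hℓs⟩, hℓs ▸ hℓ⟩,
    fun ⟨⟨ℓ, hℓs⟩, hs⟩ => ⟨ℓ, hℓs ▸ hs, hℓs⟩⟩

/-- Sites occupied in both configurations do not move the auxiliary state. -/
theorem pathHeight_eq_skew (hx : StrictMono x) (hy : StrictMono y) (hi : interlace y x)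
    (m : ℕ) :
    pathHeight (cfg y) (cfg x) m = 1 + #{i | qsite y x i ≤ m} - #{i | pseq y x i ≤ m} := by
  suffices h : occBelow (cfg x) m + #{i | pseq y x i ≤ m} =
      occBelow (cfg y) m + #{i | qsite y x i ≤ m} by
    rw [pathHeight]
    omega
  simp only [occBelow, cfg_eq_one_iff, card_pseq_le hx hy hi, card_qsite_le hx hy hi, card_filter,
    ← sum_add_distrib]
  refine sum_congr rfl fun s _ => ?_
  by_cases hX : ∃ ℓ, x ℓ = s <;> by_cases hY : ∃ j, y j = s <;> by_cases hm : (s : ℕ) < m <;>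
    simp [hX, hY, hm]

end SkewSites

section Alternation

variable {M N : ℕ} {x : Fin N → Fin M} {y : Fin (N + 1) → Fin M}

lemma pseq_le_iff (hy : StrictMono y) (i : Fin (Pset y x).card) (m : ℕ) :
    pseq y x i ≤ m ↔ (i : ℕ) < #{j | pseq y x j ≤ m} :=
  ((strictMono_pseq hy).lt_card_filter_iff (p := (· ≤ m)) (fun _ _ => le_trans) i).symm

lemma qsite_le_iff (hx : StrictMono x) (i : Fin (Qset y x).card) (m : ℕ) :
    qsite y x i ≤ m ↔ (i : ℕ) < #{j | qsite y x j ≤ m} :=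
  ((strictMono_qsite hx).lt_card_filter_iff (p := (· ≤ m)) (fun _ _ => le_trans) i).symm

lemma pathHeight_cfg_of_le (hx : StrictMono x) (hy : StrictMono y) {m : ℕ} (hm : M ≤ m) :
    pathHeight (cfg y) (cfg x) m = 0 := by
  rw [pathHeight_cfg hx hy, filter_true_of_mem fun ℓ _ => (x ℓ).isLt.trans_le hm,
    filter_true_of_mem fun j _ => (y j).isLt.trans_le hm]
  simp only [card_univ, Fintype.card_fin]
  push_cast
  ring

lemma card_Pset (hx : StrictMono x) (hy : StrictMono y) (hi : interlace y x) :
    (Pset y x).card = (Qset y x).card + 1 := by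
  have h := pathHeight_eq_skew hx hy hi M
  rw [pathHeight_cfg_of_le hx hy le_rfl, filter_true_of_mem fun i _ => qsite_le i,
    filter_true_of_mem fun i _ => pseq_le i] at h
  simp only [card_univ, Fintype.card_fin] at h
  omega

theorem qseq_lt_pseq (hx : StrictMono x) (hy : StrictMono y) (hi : interlace y x)
    (j : Fin (Pset y x).card) : qseq y x j < pseq y x j := by
  obtain ⟨_ | i, hj⟩ := j
  · exact Nat.succ_pos _
  have hiQ : i < (Qset y x).card := by have := card_Pset hx hy hi; omega
  rw [qseq_succ ⟨i, hiQ⟩]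
  by_contra! hle
  set m := pseq y x ⟨i + 1, hj⟩
  have hlt := hle.lt_of_ne (pseq_ne_qsite hx hy hi _ _)
  have hP := (pseq_le_iff hy ⟨i + 1, hj⟩ m).mp le_rfl
  have hQ := (qsite_le_iff hx ⟨i, hiQ⟩ m).not.mp (not_le.mpr hlt)
  have := (pathHeight_mem_of_interlace hx hy hi m).1
  rw [pathHeight_eq_skew hx hy hi] at this
  simp only at hP hQ
  omega

theorem pseq_lt_qseq (hx : StrictMono x) (hy : StrictMono y) (hi : interlace y x)
    (j : Fin (Pset y x).card) : pseq y x j < qseq y x (j + 1) := by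
  by_cases hj : (j : ℕ) < (Qset y x).card
  · rw [qseq_succ ⟨j, hj⟩]
    by_contra! hle
    set m := qsite y x ⟨j, hj⟩
    have hlt := hle.lt_of_ne (pseq_ne_qsite hx hy hi _ _).symm
    have hQ := (qsite_le_iff hx ⟨j, hj⟩ m).mp le_rfl
    have hP := (pseq_le_iff hy j m).not.mp (not_le.mpr hlt)
    have := (pathHeight_mem_of_interlace hx hy hi m).2
    rw [pathHeight_eq_skew hx hy hi] at this
    simp only at hP hQ
    omega
  · rw [qseq_of_card_lt (by omega)]
    exact Nat.lt_succ_of_le (pseq_le j)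

theorem pathHeight_eq_one (hx : StrictMono x) (hy : StrictMono y) (hi : interlace y x)
    (j : Fin (Pset y x).card) {m : ℕ} (h₁ : qseq y x j ≤ m) (h₂ : m < pseq y x j) :
    pathHeight (cfg y) (cfg x) m = 1 := by
  have hP := (pseq_le_iff hy j m).not.mp (not_le.mpr h₂)
  have hQ : (j : ℕ) ≤ #{i | qsite y x i ≤ m} := by
    obtain ⟨_ | i, hj⟩ := j
    · exact Nat.zero_le _
    have hiQ : i < (Qset y x).card := by have := card_Pset hx hy hi; omega
    rw [qseq_succ ⟨i, hiQ⟩, qsite_le_iff hx] at h₁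
    exact h₁
  have := (pathHeight_mem_of_interlace hx hy hi m).2
  rw [pathHeight_eq_skew hx hy hi] at this ⊢
  omega

theorem pathHeight_eq_zero (hx : StrictMono x) (hy : StrictMono y) (hi : interlace y x)
    (j : Fin (Pset y x).card) {m : ℕ} (h₁ : pseq y x j ≤ m) (h₂ : m < qseq y x (j + 1)) :
    pathHeight (cfg y) (cfg x) m = 0 := by
  have hP := (pseq_le_iff hy j m).mp h₁
  have hQ : #{i | qsite y x i ≤ m} ≤ j := by
    by_cases hj : (j : ℕ) < (Qset y x).card
    · rw [qseq_succ ⟨j, hj⟩] at h₂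
      exact not_lt.mp ((qsite_le_iff hx ⟨j, hj⟩ m).not.mp (not_le.mpr h₂))
    · exact (card_le_univ _).trans (by simp only [Fintype.card_fin]; omega)
  have := (pathHeight_mem_of_interlace hx hy hi m).1
  rw [pathHeight_eq_skew hx hy hi] at this ⊢
  omega

end Alternation

section Assembly

variable (t a b c d e f u : K) {M N : ℕ} {x : Fin N → Fin M} {y : Fin (N + 1) → Fin M}

lemma prod_siteWeight_Ioo_of_pathHeight_eq_zero (hx : Function.Injective x) {lo hi : ℕ}
    (h : ∀ m, lo ≤ m → m < hi → pathHeight (cfg y) (cfg x) m = 0) :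
    ∏ n ∈ Ioo lo hi, siteWeight t a b c d e f u y x n =
      (a * t * u + b) ^ cnt x lo hi * (a * u + b) ^ (hi - lo - 1 - cnt x lo hi) := by
  rw [← prod_Ioo_ite_eq_pow hx]
  refine prod_congr rfl fun n hn => ?_
  rw [mem_Ioo] at hn
  simp [siteWeight, heightWeight, h (n - 1) (by omega) (by omega), h n (by omega) hn.2]

lemma prod_siteWeight_Ioo_of_pathHeight_eq_one (hx : Function.Injective x) {lo hi : ℕ}
    (h : ∀ m, lo ≤ m → m < hi → pathHeight (cfg y) (cfg x) m = 1) :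
    ∏ n ∈ Ioo lo hi, siteWeight t a b c d e f u y x n =
      (e * u + t * f) ^ cnt x lo hi * (e * u + f) ^ (hi - lo - 1 - cnt x lo hi) := by
  rw [← prod_Ioo_ite_eq_pow hx]
  refine prod_congr rfl fun n hn => ?_
  rw [mem_Ioo] at hn
  simp [siteWeight, heightWeight, h (n - 1) (by omega) (by omega), h n (by omega) hn.2]

theorem prod_siteWeight_eq (hx : StrictMono x) (hy : StrictMono y) (hi : interlace y x) :
    ∏ n ∈ Ioo 0 (M + 1), siteWeight t a b c d e f u y x n =
      ((1 - t) * c * u) ^ (Pset y x).card * ((1 - t) * d) ^ (Qset y x).card *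
      ∏ j : Fin (Pset y x).card,
        (a * t * u + b) ^ cnt x (pseq y x j) (qseq y x ((j : ℕ) + 1)) *
          (a * u + b) ^ (qseq y x ((j : ℕ) + 1) - pseq y x j - 1 -
            cnt x (pseq y x j) (qseq y x ((j : ℕ) + 1))) *
          (e * u + t * f) ^ cnt x (qseq y x (j : ℕ)) (pseq y x j) *
          (e * u + f) ^ (pseq y x j - qseq y x (j : ℕ) - 1 -
            cnt x (qseq y x (j : ℕ)) (pseq y x j)) := by
  have hcard := card_Pset hx hy hi
  have hlt₁ := qseq_lt_pseq hx hy hi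
  have hlt₂ := pseq_lt_qseq hx hy hi
  have hp (j : Fin (Pset y x).card) :
      siteWeight t a b c d e f u y x (pseq y x j) = (1 - t) * c * u := by
    have := hlt₁ j
    simp [siteWeight, heightWeight, pathHeight_eq_one hx hy hi j (m := pseq y x j - 1) (by omega)
      (by omega), pathHeight_eq_zero hx hy hi j le_rfl (hlt₂ j)]
  have hq : ∀ j ∈ Ioo 0 (Pset y x).card,
      siteWeight t a b c d e f u y x (qseq y x j) = (1 - t) * d := by
    intro j hj
    rw [mem_Ioo] at hj
    obtain ⟨i, rfl⟩ : ∃ i, j = i + 1 := ⟨j - 1, by omega⟩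
    have := hlt₂ ⟨i, by omega⟩
    simp only at this
    simp [siteWeight, heightWeight,
      pathHeight_eq_zero hx hy hi ⟨i, by omega⟩ (m := qseq y x (i + 1) - 1) (by omega)
        (by dsimp only; omega),
      pathHeight_eq_one hx hy hi ⟨i + 1, hj.2⟩ le_rfl (hlt₁ ⟨i + 1, hj.2⟩)]
  rw [show Ioo 0 (M + 1) = Ioo (qseq y x 0) (qseq y x (Pset y x).card) by
      rw [qseq_zero, qseq_of_card_lt (by omega)],
    prod_Ioo_eq_prod_blocks _ _ _ fun j => ⟨hlt₁ j, hlt₂ j⟩, prod_congr rfl hq, prod_const,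
    Nat.card_Ioo, show (Pset y x).card - 0 - 1 = (Qset y x).card by omega]
  rw [prod_congr rfl fun j _ => by
    rw [prod_siteWeight_Ioo_of_pathHeight_eq_one t a b c d e f u hx.injective
        fun m h₁ h₂ => pathHeight_eq_one hx hy hi j h₁ h₂, hp j,
      prod_siteWeight_Ioo_of_pathHeight_eq_zero t a b c d e f u hx.injective
        fun m h₁ h₂ => pathHeight_eq_zero hx hy hi j h₁ h₂]]
  simp only [prod_mul_distrib, prod_const, card_univ, Fintype.card_fin, mul_pow]
  ring

end Assembly

theorem B_matrix_element_general {M N : ℕ} (t a b c d e f : K)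
    (u : K)
    (x : Fin N → Fin M) (hx : StrictMono x)
    (y : Fin (N + 1) → Fin M) (hy : StrictMono y) :
    Bop M t a b c d e f u (cfg y) (cfg x) = Gskew t a b c d e f u y x := by
  by_cases hi : interlace y x
  · let α : Fin (M + 1) → Fin 2 := fun m => if pathHeight (cfg y) (cfg x) m = 0 then 0 else 1
    have hα (m : Fin (M + 1)) : (α m : ℤ) = pathHeight (cfg y) (cfg x) m := by
      have := pathHeight_mem_of_interlace hx hy hi m
      simp only [α]
      split_ifs with h
      · simp [h]
      · simp only [Fin.isValue, Fin.val_one, Nat.cast_one]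
        omega
    rw [Bop_apply_eq_prod hα (pathHeight_cfg_of_le hx hy le_rfl),
      prod_LL_eq_prod_heightWeight t a b c d e f u hα, prod_heightWeight_eq_prod_siteWeight,
      prod_siteWeight_eq t a b c d e f u hx hy hi, Gskew, if_pos hi]
  · rw [Gskew, if_neg hi]
    refine Bop_apply_eq_zero ?_
    by_contra! h
    exact hi (interlace_of_pathHeight_mem hx hy h)

theorem B_matrix_element {M N : ℕ} (t a b c d e f : K)
    (ht : t ≠ 1) (ha : a ≠ 0) (hb : b ≠ 0) (hc : c ≠ 0) (hd : d ≠ 0)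
    (he : e ≠ 0) (hf : f ≠ 0)
    (hcon1 : c * d + a * f = 0) (hcon2 : t * (c * d) + b * e = 0)
    (u : K)
    (x : Fin N → Fin M) (hx : StrictMono x)
    (y : Fin (N + 1) → Fin M) (hy : StrictMono y) :
    Bop M t a b c d e f u (cfg y) (cfg x) = Gskew t a b c d e f u y x :=
  B_matrix_element_general t a b c d e f u x hx y hy
end
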